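/- arXiv:2311.08378 — 4 statements merged into one kernel-verified Lean document; each statement's English description precedes it below -/
import Mathlib

section
/- Let F : (0,∞) → ℝ be continuous with F(t) = 1/t + O(t) as t → 0⁺ (i.e. t·F(t) − 1 = O(t²)). Define E(t) = exp(∫_{1/2}^t F(ξ) dξ) and, for x₁ ≥ 0, x(t) = x₁·E(t)/(1 + x₁·∫₀ᵗ E(ξ) dξ). Then x extends continuously to t = 0 with x(0) = 0, and lim_{t→0⁺} x(t)/t exists and is finite. -/
/-!
Writing `F t = t⁻¹ + G t`, the hypothesis makes `G = O(t)`, so `G` is bounded and integrable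
near `0`, and `E t = 2 t exp (∫_{1/2}^t G)` where the exponent converges as `t → 0⁺`. Since also
`∫₀ᵗ E → 0`, the quotient `x t / t = 2 x₁ exp (∫_{1/2}^t G) / (1 + x₁ ∫₀ᵗ E)` converges, and then
`x t = (x t / t) · t → 0`.
-/

open Real Filter Topology MeasureTheory Asymptotics Set

theorem isBigO_sub_inv_of_isBigO_mul_sub_one {F : ℝ → ℝ}
    (h : (fun t => t * F t - 1) =O[𝓝[>] (0:ℝ)] fun t => t ^ 2) :
    (fun t => F t - t⁻¹) =O[𝓝[>] (0:ℝ)] fun t => t := by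
  refine (h.mul (isBigO_refl (fun t : ℝ => t⁻¹) _)).congr' ?_ ?_ <;>
    filter_upwards [self_mem_nhdsWithin] with t (ht : 0 < t) <;> field_simp

theorem intervalIntegrable_of_continuousOn_Ioi_of_tendsto {f : ℝ → ℝ} {c d l : ℝ} (hcd : c ≤ d)
    (hf : ContinuousOn f (Ioi c)) (hlim : Tendsto f (𝓝[>] c) (𝓝 l)) :
    IntervalIntegrable f volume c d := by
  obtain ⟨s, hs, hfs⟩ := hlim.integrableAtFilter
    (hf.stronglyMeasurableAtFilter_nhdsWithin measurableSet_Ioi c) (volume.finiteAt_nhdsWithin c _)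
  obtain ⟨u, hcu : c < u, hu⟩ := mem_nhdsGT_iff_exists_Ioo_subset.mp hs
  have hmid : c < (c + u) / 2 := by linarith
  rw [intervalIntegrable_iff_integrableOn_Ioc_of_le hcd]
  refine (integrableOn_union.mpr ⟨hfs.mono_set hu,
    (hf.mono fun x (hx : x ∈ Icc _ d) => hmid.trans_le hx.1).integrableOn_Icc⟩).mono_set ?_
  rintro x ⟨hcx, hxd⟩
  by_cases hxu : x < u
  · exact Or.inl ⟨hcx, hxu⟩
  · exact Or.inr ⟨by linarith, hxd⟩

theorem exp_integral_eq_div_mul_exp_integral_sub_inv {F : ℝ → ℝ} (hF : ContinuousOn F (Ioi 0))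
    {a t : ℝ} (ha : 0 < a) (ht : 0 < t) :
    exp (∫ ξ in a..t, F ξ) = t / a * exp (∫ ξ in a..t, (F ξ - ξ⁻¹)) := by
  have hpos : uIcc a t ⊆ Ioi 0 := fun ξ hξ => lt_of_lt_of_le (lt_min ha ht) hξ.1
  have hinv : ContinuousOn (fun ξ : ℝ => ξ⁻¹) (Ioi 0) :=
    continuousOn_inv₀.mono fun ξ hξ => ne_of_gt hξ
  rw [intervalIntegral.integral_sub ((hF.mono hpos).intervalIntegrable)
    ((hinv.mono hpos).intervalIntegrable), integral_inv_of_pos ha ht, exp_sub,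
    exp_log (div_pos ht ha)]
  field_simp

theorem tendsto_primitive_nhdsGT {f : ℝ → ℝ} {a c d : ℝ} (hf : IntervalIntegrable f volume c d)
    (hcd : c < d) (ha : a ∈ Icc c d) :
    Tendsto (fun t => ∫ ξ in a..t, f ξ) (𝓝[>] c) (𝓝 (∫ ξ in a..c, f ξ)) := by
  have hcont := intervalIntegral.continuousOn_primitive_interval' hf
    (by rwa [uIcc_of_le hcd.le])
  rw [uIcc_of_le hcd.le] at hcont
  refine (hcont c (left_mem_Icc.2 hcd.le)).tendsto.mono_left ?_
  rw [← nhdsWithin_Ioc_eq_nhdsGT hcd]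
  exact nhdsWithin_mono _ Ioc_subset_Icc_self

theorem stmt1_general (F E x : ℝ → ℝ) (hF : ContinuousOn F (Set.Ioi 0))
    (hFasym : (fun t => t * F t - 1) =O[𝓝[>] (0:ℝ)] fun t => t^2)
    (hE : ∀ t, E t = Real.exp (∫ ξ in (1/2 : ℝ)..t, F ξ))
    (hInt : ∀ t ∈ Set.Ioi (0:ℝ), IntervalIntegrable E volume 0 t)
    (x₁ : ℝ)
    (hx : ∀ t ∈ Set.Ioi (0:ℝ), x t = x₁ * E t / (1 + x₁ * ∫ ξ in (0:ℝ)..t, E ξ)) :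
    Tendsto x (𝓝[>] 0) (𝓝 0) ∧
    ∃ L : ℝ, Tendsto (fun t => x t / t) (𝓝[>] 0) (𝓝 L) := by
  have hid : Tendsto (fun t : ℝ => t) (𝓝[>] 0) (𝓝 0) := tendsto_id.mono_left nhdsWithin_le_nhds
  set G : ℝ → ℝ := fun t => F t - t⁻¹
  have hGint : IntervalIntegrable G volume 0 (1/2) :=
    intervalIntegrable_of_continuousOn_Ioi_of_tendsto (by norm_num)
      (hF.sub (continuousOn_inv₀.mono fun t ht => ne_of_gt ht))
      ((isBigO_sub_inv_of_isBigO_mul_sub_one hFasym).trans_tendsto hid)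
  have hH := tendsto_primitive_nhdsGT hGint (by norm_num) (right_mem_Icc.2 (by norm_num))
  have hP : Tendsto (fun t => ∫ ξ in (0:ℝ)..t, E ξ) (𝓝[>] 0) (𝓝 0) := by
    simpa using tendsto_primitive_nhdsGT (hInt (1/2) (by norm_num)) (by norm_num)
      (left_mem_Icc.2 (by norm_num))
  have hquot : Tendsto (fun t => x t / t) (𝓝[>] 0)
      (𝓝 (x₁ * (2 * exp (∫ ξ in (1/2:ℝ)..0, G ξ)) / (1 + x₁ * 0))) := by
    have hexp := (continuous_exp.tendsto _).comp hH
    refine ((tendsto_const_nhds.mul (tendsto_const_nhds.mul hexp)).div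
      (tendsto_const_nhds.add (tendsto_const_nhds.mul hP)) (by simp)).congr' ?_
    filter_upwards [self_mem_nhdsWithin] with t (ht : 0 < t)
    rw [hx t ht, hE t, exp_integral_eq_div_mul_exp_integral_sub_inv hF (by norm_num) ht]
    field_simp
    simp [G]
  have hx0 : Tendsto (fun t => x t / t * t) (𝓝[>] 0) (𝓝 0) := by simpa using hquot.mul hid
  refine ⟨hx0.congr' ?_, _, hquot⟩
  filter_upwards [self_mem_nhdsWithin] with t (ht : 0 < t)
  exact div_mul_cancel₀ _ ht.ne'

/-- For `F` continuous on `(0,∞)` with `F t = 1/t + O(t)` as `t → 0⁺`,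
`E t = exp (∫_{1/2}^t F)` and `x₁ ≥ 0`, the function
`x t = x₁ E t / (1 + x₁ ∫₀ᵗ E)` extends continuously to `0` with `x 0 = 0`,
and `x t / t` has a finite limit as `t → 0⁺`. -/
theorem stmt1 (F E x : ℝ → ℝ) (hF : ContinuousOn F (Set.Ioi 0))
    (hFasym : (fun t => t * F t - 1) =O[𝓝[>] (0:ℝ)] fun t => t^2)
    (hE : ∀ t, E t = Real.exp (∫ ξ in (1/2 : ℝ)..t, F ξ))
    (hInt : ∀ t ∈ Set.Ioi (0:ℝ), IntervalIntegrable E volume 0 t)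
    (x₁ : ℝ) (hx₁ : 0 ≤ x₁)
    (hx : ∀ t ∈ Set.Ioi (0:ℝ), x t = x₁ * E t / (1 + x₁ * ∫ ξ in (0:ℝ)..t, E ξ)) :
    Tendsto x (𝓝[>] 0) (𝓝 0) ∧
    ∃ L : ℝ, Tendsto (fun t => x t / t) (𝓝[>] 0) (𝓝 L) :=
  stmt1_general F E x hF hFasym hE hInt x₁ hx
end

section
/- Let F : (0,∞) → ℝ be continuous with F(t) = 1/t + O(t) as t → 0⁺, let E(t) = exp(∫_{1/2}^t F(ξ) dξ), and let A₁ : [0,∞) → ℝ be smooth with A₁(t) = t/2 + O(t³). Define x₀(t) = E(t)/∫₀ᵗ E(ξ) dξ for t > 0. Then lim_{t→0⁺} x₀(t)·A₁(t) = 1. -/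
open Real Filter Topology MeasureTheory Asymptotics

/-- With `F t = 1/t + O(t)` as `t → 0⁺`, `E t = exp (∫_{1/2}^t F)` and `A₁` smooth with
`A₁ t = t/2 + O(t³)`, the function `x₀ t = E t / ∫₀ᵗ E` satisfies `x₀ t * A₁ t → 1`
as `t → 0⁺`. -/
theorem stmt2 (F A₁ E x₀ : ℝ → ℝ) (hF : ContinuousOn F (Set.Ioi 0))
    (hFasym : (fun t => t * F t - 1) =O[𝓝[>] (0:ℝ)] fun t => t^2)
    (hE : ∀ t, E t = Real.exp (∫ ξ in (1/2 : ℝ)..t, F ξ))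
    (hInt : ∀ t ∈ Set.Ioi (0:ℝ), IntervalIntegrable E volume 0 t)
    (hA : ContDiff ℝ (⊤ : ℕ∞) A₁)
    (hAasym : (fun t => A₁ t - t/2) =O[𝓝[>] (0:ℝ)] fun t => t^3)
    (hx₀ : ∀ t ∈ Set.Ioi (0:ℝ), x₀ t = E t / ∫ ξ in (0:ℝ)..t, E ξ) :
    Tendsto (fun t => x₀ t * A₁ t) (𝓝[>] 0) (𝓝 1) := by
  classical
  set H : ℝ → ℝ := fun ξ => F ξ - ξ⁻¹ with hHdef
  have hHcont : ContinuousOn H (Set.Ioi 0) := by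
    apply hF.sub
    exact ContinuousOn.inv₀ continuousOn_id (fun x hx => ne_of_gt hx)
  -- extract the bound from hFasym
  obtain ⟨C, hC⟩ := hFasym.isBigOWith
  rw [Asymptotics.isBigOWith_iff, eventually_nhdsWithin_iff, Metric.eventually_nhds_iff] at hC
  obtain ⟨δ₀, hδ₀pos, hC⟩ := hC
  set δ : ℝ := min (δ₀/2) (1/4) with hδdef
  have hδpos : 0 < δ := lt_min (by linarith) (by norm_num)
  have hδlt : δ < 1/2 := lt_of_le_of_lt (min_le_right _ _) (by norm_num)
  have hδ0 : δ < δ₀ := lt_of_le_of_lt (min_le_left _ _) (by linarith)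
  -- bound on H on (0, δ]
  have hHbdd : ∀ ξ ∈ Set.Ioc (0:ℝ) δ, ‖H ξ‖ ≤ |C| * δ₀ := by
    intro ξ hξ
    have hξ0 : 0 < ξ := hξ.1
    have hξδ : ξ < δ₀ := lt_of_le_of_lt hξ.2 hδ0
    have h1 : ‖ξ * F ξ - 1‖ ≤ C * ‖ξ^2‖ := hC (by simpa [Real.dist_eq, abs_of_pos hξ0] using hξδ) hξ0
    have h2 : |ξ * F ξ - 1| ≤ |C| * ξ^2 := by
      calc |ξ * F ξ - 1| ≤ C * ‖ξ^2‖ := h1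
        _ ≤ |C| * ξ^2 := by
          rw [Real.norm_eq_abs, abs_of_nonneg (by positivity : (0:ℝ) ≤ ξ^2)]
          exact mul_le_mul_of_nonneg_right (le_abs_self C) (by positivity)
    have hHval : H ξ = (ξ * F ξ - 1) / ξ := by
      show F ξ - ξ⁻¹ = (ξ * F ξ - 1) / ξ
      rw [sub_div, mul_div_cancel_left₀ _ hξ0.ne', one_div]
    rw [Real.norm_eq_abs, hHval, abs_div, abs_of_pos hξ0]
    rw [div_le_iff₀ hξ0]
    calc |ξ * F ξ - 1| ≤ |C| * ξ^2 := h2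
      _ = (|C| * ξ) * ξ := by ring
      _ ≤ (|C| * δ₀) * ξ := by
        apply mul_le_mul_of_nonneg_right _ hξ0.le
        exact mul_le_mul_of_nonneg_left (le_of_lt hξδ) (abs_nonneg C)
  -- integrability of H on [0, 1/2]
  have hH1 : IntervalIntegrable H volume 0 δ := by
    rw [intervalIntegrable_iff_integrableOn_Ioc_of_le hδpos.le]
    refine ⟨(hHcont.mono (fun x hx => hx.1)).aestronglyMeasurable measurableSet_Ioc, ?_⟩
    exact HasFiniteIntegral.restrict_of_bounded (C := |C| * δ₀) measure_Ioc_lt_top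
      ((ae_restrict_mem measurableSet_Ioc).mono hHbdd)
  have hH2 : IntervalIntegrable H volume δ (1/2) := by
    apply ContinuousOn.intervalIntegrable
    apply hHcont.mono
    rw [Set.uIcc_of_le hδlt.le]
    exact fun x hx => lt_of_lt_of_le hδpos hx.1
  have hH12 : IntervalIntegrable H volume 0 (1/2) := hH1.trans hH2
  -- the primitive of H is continuous at 0 from the right
  have hP : Tendsto (fun t => ∫ ξ in (0:ℝ)..t, H ξ) (𝓝[>] 0) (𝓝 0) := by
    have hcont := intervalIntegral.continuousOn_primitive_interval' hH12 Set.left_mem_uIcc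
    have h0 := (hcont 0 Set.left_mem_uIcc).tendsto
    rw [intervalIntegral.integral_same] at h0
    refine h0.mono_left ?_
    rw [← nhdsWithin_Ioo_eq_nhdsGT (by norm_num : (0:ℝ) < 1/2)]
    apply nhdsWithin_mono
    rw [Set.uIcc_of_le (by norm_num : (0:ℝ) ≤ 1/2)]
    exact Set.Ioo_subset_Icc_self
  set K : ℝ := ∫ ξ in (0:ℝ)..(1/2:ℝ), H ξ with hKdef
  set c : ℝ := 2 * Real.exp (-K) with hcdef
  have hcpos : 0 < c := by positivity
  have hev : ∀ᶠ t in 𝓝[>] (0:ℝ), t ∈ Set.Ioo (0:ℝ) (1/2) :=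
    Ioo_mem_nhdsGT_of_mem ⟨le_refl 0, by norm_num⟩
  -- Part 1 : E t / t → c
  have key : ∀ t ∈ Set.Ioo (0:ℝ) (1/2), E t / t = 2 * Real.exp ((∫ ξ in (0:ℝ)..t, H ξ) - K) := by
    intro t ht
    have ht0 : 0 < t := ht.1
    have hsub : Set.uIcc (1/2:ℝ) t ⊆ Set.Ioi 0 := by
      rw [Set.uIcc_of_ge ht.2.le]
      exact fun x hx => lt_of_lt_of_le ht0 hx.1
    have hFint : IntervalIntegrable F volume (1/2) t := (hF.mono hsub).intervalIntegrable
    have hinvint : IntervalIntegrable (fun ξ : ℝ => ξ⁻¹) volume (1/2) t :=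
      ((ContinuousOn.inv₀ continuousOn_id (fun x hx => ne_of_gt hx)).mono hsub).intervalIntegrable
    have hHint : IntervalIntegrable H volume (1/2) t := hFint.sub hinvint
    have hsplit : (∫ ξ in (1/2:ℝ)..t, F ξ)
        = (∫ ξ in (1/2:ℝ)..t, H ξ) + ∫ ξ in (1/2:ℝ)..t, ξ⁻¹ := by
      rw [← intervalIntegral.integral_add hHint hinvint]
      congr 1
      funext ξ
      simp [hHdef]
    have hinv : (∫ ξ in (1/2:ℝ)..t, ξ⁻¹) = Real.log 2 + Real.log t := by
      rw [integral_inv (by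
        rw [Set.mem_uIcc]
        push_neg
        constructor <;> intro h <;> [linarith; linarith])]
      rw [show t / (1/2:ℝ) = 2 * t by ring, Real.log_mul two_ne_zero (ne_of_gt ht0)]
    have hHt : IntervalIntegrable H volume 0 t := by
      apply hH12.mono_set
      rw [Set.uIcc_of_le ht0.le, Set.uIcc_of_le (by norm_num : (0:ℝ) ≤ 1/2)]
      exact Set.Icc_subset_Icc le_rfl ht.2.le
    have hHsplit : (∫ ξ in (1/2:ℝ)..t, H ξ) = (∫ ξ in (0:ℝ)..t, H ξ) - K := by
      rw [hKdef]
      exact (intervalIntegral.integral_interval_sub_left hHt hH12).symm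
    rw [hE t, hsplit, hinv, hHsplit]
    rw [show (∫ ξ in (0:ℝ)..t, H ξ) - K + (Real.log 2 + Real.log t)
        = ((∫ ξ in (0:ℝ)..t, H ξ) - K) + Real.log 2 + Real.log t by ring]
    rw [Real.exp_add, Real.exp_add, Real.exp_log two_pos, Real.exp_log ht0]
    field_simp
  have part1 : Tendsto (fun t => E t / t) (𝓝[>] 0) (𝓝 c) := by
    have hlim : Tendsto (fun t => 2 * Real.exp ((∫ ξ in (0:ℝ)..t, H ξ) - K)) (𝓝[>] 0)
        (𝓝 (2 * Real.exp (0 - K))) := by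
      exact (((Real.continuous_exp.tendsto _).comp (hP.sub_const K)).const_mul 2)
    rw [zero_sub] at hlim
    exact hlim.congr' (hev.mono fun t ht => (key t ht).symm)
  -- Part 3 : A₁ t / t → 1/2
  have hA1lim : Tendsto (fun t => A₁ t / t) (𝓝[>] 0) (𝓝 (1/2)) := by
    have h2 : (fun t : ℝ => t^3) =o[𝓝[>] (0:ℝ)] fun t => t := by
      rw [Asymptotics.isLittleO_iff_tendsto' (by
        filter_upwards [self_mem_nhdsWithin] with t ht h
        exact absurd h (ne_of_gt ht))]
      have : Tendsto (fun t : ℝ => t^2) (𝓝[>] 0) (𝓝 0) := by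
        have := (continuous_pow 2).tendsto (0:ℝ)
        simpa using this.mono_left nhdsWithin_le_nhds
      refine this.congr' ?_
      filter_upwards [self_mem_nhdsWithin] with t ht
      have : (t:ℝ) ≠ 0 := ne_of_gt ht
      field_simp
    have h1 : (fun t => A₁ t - t/2) =o[𝓝[>] (0:ℝ)] fun t => t := hAasym.trans_isLittleO h2
    have h3 := h1.tendsto_div_nhds_zero
    have h4 := h3.add (tendsto_const_nhds (x := (1/2:ℝ)))
    rw [zero_add] at h4
    refine h4.congr' ?_
    filter_upwards [self_mem_nhdsWithin] with t ht
    have htne : (t:ℝ) ≠ 0 := ne_of_gt ht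
    field_simp
    ring
  -- Part 2 : (∫₀ᵗ E) / t² → c/2
  set S : ℝ → ℝ := fun t => ∫ ξ in (0:ℝ)..t, E ξ with hSdef
  have hne0ae : ∀ᵐ ξ : ℝ ∂volume, ξ ≠ (0:ℝ) := by
    rw [ae_iff]
    have : {a : ℝ | ¬ a ≠ 0} = {0} := by ext x; simp
    rw [this]
    exact measure_singleton 0
  have part2 : Tendsto (fun t => S t / t^2) (𝓝[>] 0) (𝓝 (c/2)) := by
    rw [Metric.tendsto_nhds]
    intro ε hε
    have h1 := (Metric.tendsto_nhds.1 part1) ε hε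
    rw [eventually_nhdsWithin_iff, Metric.eventually_nhds_iff] at h1
    obtain ⟨δ₁, hδ₁pos, h1⟩ := h1
    filter_upwards [Ioo_mem_nhdsGT_of_mem ⟨le_refl 0, hδ₁pos⟩] with t ht
    have ht0 : 0 < t := ht.1
    have ht2 : 0 < t^2 := by positivity
    have hbound : ∀ ξ ∈ Set.Ioc (0:ℝ) t, (c - ε) * ξ ≤ E ξ ∧ E ξ ≤ (c + ε) * ξ := by
      intro ξ hξ
      have hξ0 : 0 < ξ := hξ.1
      have hξδ : ξ < δ₁ := lt_of_le_of_lt hξ.2 ht.2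
      have hd := h1 (by simpa [Real.dist_eq, abs_of_pos hξ0] using hξδ) hξ0
      rw [Real.dist_eq, abs_lt] at hd
      have hcancel : E ξ / ξ * ξ = E ξ := div_mul_cancel₀ _ (ne_of_gt hξ0)
      constructor <;> nlinarith [hd.1, hd.2]
    have hEint : IntervalIntegrable E volume 0 t := hInt t ht0
    have hlam : ∀ a : ℝ, IntervalIntegrable (fun ξ => a * ξ) volume 0 t :=
      fun a => (continuous_const.mul continuous_id).intervalIntegrable _ _
    have hlow : (c - ε) * (t^2) / 2 ≤ S t := by
      have hmono := intervalIntegral.integral_mono_ae_restrict ht0.le (hlam (c - ε)) hEint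
        (((ae_restrict_mem measurableSet_Icc).and (ae_restrict_of_ae hne0ae)).mono
          (fun ξ hξ => (hbound ξ ⟨lt_of_le_of_ne hξ.1.1 (Ne.symm hξ.2), hξ.1.2⟩).1))
      calc (c - ε) * (t^2) / 2 = ∫ ξ in (0:ℝ)..t, (c - ε) * ξ := by
            rw [intervalIntegral.integral_const_mul, integral_id]; ring
        _ ≤ S t := hmono
    have hup : S t ≤ (c + ε) * (t^2) / 2 := by
      have hmono := intervalIntegral.integral_mono_ae_restrict ht0.le hEint (hlam (c + ε))
        (((ae_restrict_mem measurableSet_Icc).and (ae_restrict_of_ae hne0ae)).mono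
          (fun ξ hξ => (hbound ξ ⟨lt_of_le_of_ne hξ.1.1 (Ne.symm hξ.2), hξ.1.2⟩).2))
      calc S t ≤ ∫ ξ in (0:ℝ)..t, (c + ε) * ξ := hmono
        _ = (c + ε) * (t^2) / 2 := by
            rw [intervalIntegral.integral_const_mul, integral_id]; ring
    rw [Real.dist_eq, abs_lt]
    have hcancel : S t / t^2 * t^2 = S t := div_mul_cancel₀ _ (ne_of_gt ht2)
    constructor <;> nlinarith
  -- Combine
  have hc2 : c / 2 ≠ 0 := by positivity
  have comb : Tendsto (fun t => (E t / t) * (A₁ t / t) / (S t / t^2)) (𝓝[>] 0)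
      (𝓝 (c * (1/2) / (c/2))) := (part1.mul hA1lim).div part2 hc2
  rw [show c * (1/2) / (c/2) = 1 by field_simp] at comb
  refine comb.congr' ?_
  filter_upwards [self_mem_nhdsWithin] with t ht
  have ht0 : (0:ℝ) < t := ht
  have hSpos : 0 < S t := by
    apply intervalIntegral.intervalIntegral_pos_of_pos_on (hInt t ht0)
      (fun x _ => by rw [hE]; exact Real.exp_pos _) ht0
  rw [hx₀ t ht0]
  change _ = E t / S t * A₁ t
  have htne : t ≠ 0 := ne_of_gt ht0
  have hSne : S t ≠ 0 := ne_of_gt hSpos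
  field_simp
end

section
/- Let A₁, B₁ : (0,∞) → ℝ be positive continuous functions. For the system x⁺' = (x⁺/A₁)(1 − A₁²/B₁² − x⁺) + (A₁/B₁²)(x⁻)², x⁻' = (2x⁻/A₁)(x⁺ − 1), the open square R = {(x⁺, x⁻) : 0 < x⁺ < 1, 0 < x⁻ < 1} is forward-invariant: if a solution satisfies (x⁺(t₀), x⁻(t₀)) ∈ R for some t₀ > 0, then (x⁺(t), x⁻(t)) ∈ R for all t ≥ t₀ in the maximal interval of existence. Consequently such solutions exist for all t ∈ [t₀, ∞). -/
/-!
Let `τ` be the first time the solution leaves the open square `R`. Up to `τ` the solution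
lies in the closed square, and we show it is still in `R` at `τ`. Since
`x⁻' = (2x⁻/A₁)(x⁺ - 1) ≤ 0`, `x⁻` decreases, so `x⁻(τ) < 1`; since
`x⁻' ≥ -(2 / min A₁) x⁻`, `x⁻` decays at most exponentially, so `x⁻(τ) > 0`.
If `x⁺(τ) = 0` then `x⁺` has a one-sided minimum at `τ` but `x⁺'(τ) = (A₁/B₁²)(x⁻)² > 0`;
if `x⁺(τ) = 1` it has a one-sided maximum but `x⁺'(τ) = (A₁/B₁²)((x⁻)² - 1) < 0`.
-/

open Real Set

theorem monotoneOn_Icc_of_hasDerivAt_nonneg {f f' : ℝ → ℝ} {a b : ℝ}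
    (hf : ∀ s ∈ Icc a b, HasDerivAt f (f' s) s) (hf' : ∀ s ∈ Ioo a b, 0 ≤ f' s) :
    MonotoneOn f (Icc a b) :=
  monotoneOn_of_hasDerivWithinAt_nonneg (convex_Icc a b)
    (fun s hs => (hf s hs).continuousAt.continuousWithinAt)
    (fun s hs => (hf s (interior_subset hs)).hasDerivWithinAt)
    (fun s hs => hf' s (by rwa [interior_Icc] at hs))

theorem antitoneOn_Icc_of_hasDerivAt_nonpos {f f' : ℝ → ℝ} {a b : ℝ}
    (hf : ∀ s ∈ Icc a b, HasDerivAt f (f' s) s) (hf' : ∀ s ∈ Ioo a b, f' s ≤ 0) :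
    AntitoneOn f (Icc a b) :=
  antitoneOn_of_hasDerivWithinAt_nonpos (convex_Icc a b)
    (fun s hs => (hf s hs).continuousAt.continuousWithinAt)
    (fun s hs => (hf s (interior_subset hs)).hasDerivWithinAt)
    (fun s hs => hf' s (by rwa [interior_Icc] at hs))

theorem monotoneOn_mul_exp_of_neg_mul_le {f f' : ℝ → ℝ} {K a b : ℝ}
    (hf : ∀ s ∈ Icc a b, HasDerivAt f (f' s) s) (hf' : ∀ s ∈ Ioo a b, -K * f s ≤ f' s) :
    MonotoneOn (fun s => f s * exp (K * s)) (Icc a b) := by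
  refine monotoneOn_Icc_of_hasDerivAt_nonneg
    (f' := fun s => f' s * exp (K * s) + f s * (exp (K * s) * (K * 1)))
    (fun s hs => ?_) fun s hs => ?_
  · exact (hf s hs).mul ((hasDerivAt_id' s).const_mul K).exp
  · have h := hf' s hs
    have : 0 ≤ (f' s + K * f s) * exp (K * s) := mul_nonneg (by linarith) (exp_pos _).le
    linarith

theorem pos_of_neg_mul_le_deriv {f f' : ℝ → ℝ} {K a b : ℝ} (hab : a ≤ b)
    (hf : ∀ s ∈ Icc a b, HasDerivAt f (f' s) s) (hf' : ∀ s ∈ Ioo a b, -K * f s ≤ f' s)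
    (ha : 0 < f a) : 0 < f b := by
  have hmono := monotoneOn_mul_exp_of_neg_mul_le hf hf'
    (left_mem_Icc.2 hab) (right_mem_Icc.2 hab) hab
  exact pos_of_mul_pos_left ((mul_pos ha (exp_pos _)).trans_le hmono) (exp_pos _).le

theorem HasDerivAt.nonpos_of_isMinOn_Icc {f : ℝ → ℝ} {f' a x : ℝ} (hf : HasDerivAt f f' x)
    (hax : a < x) (hmin : IsMinOn f (Icc a x) x) : f' ≤ 0 := by
  have hcone : a - x ∈ posTangentConeAt (Icc a x) x :=
    sub_mem_posTangentConeAt_of_segment_subset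
      ((segment_symm ℝ a x).symm ▸ segment_subset_Icc hax.le)
  have := (hmin.localize : IsLocalMinOn f (Icc a x) x).hasFDerivWithinAt_nonneg
    hf.hasFDerivAt.hasFDerivWithinAt hcone
  rw [ContinuousLinearMap.toSpanSingleton_apply, smul_eq_mul] at this
  nlinarith

theorem HasDerivAt.nonneg_of_isMaxOn_Icc {f : ℝ → ℝ} {f' a x : ℝ} (hf : HasDerivAt f f' x)
    (hax : a < x) (hmax : IsMaxOn f (Icc a x) x) : 0 ≤ f' :=
  neg_nonpos.1 (hf.neg.nonpos_of_isMinOn_Icc hax hmax.neg)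

theorem exists_first_exit {X : Type*} [TopologicalSpace X] {γ : ℝ → X} {S : Set X}
    (hS : IsOpen S) {a b : ℝ} (hab : a ≤ b) (hγ : ContinuousOn γ (Icc a b)) (ha : γ a ∈ S)
    (hb : γ b ∉ S) : ∃ τ ∈ Ioc a b, γ τ ∉ S ∧ ∀ s ∈ Ico a τ, γ s ∈ S := by
  set F : Set ℝ := Icc a b ∩ γ ⁻¹' Sᶜ
  have hF : IsClosed F := hγ.preimage_isClosed_of_isClosed isClosed_Icc hS.isClosed_compl
  have hbF : b ∈ F := ⟨right_mem_Icc.2 hab, hb⟩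
  have hbdd : BddBelow F := ⟨a, fun s hs => hs.1.1⟩
  have hτ : sInf F ∈ F := hF.csInf_mem ⟨b, hbF⟩ hbdd
  refine ⟨sInf F, ⟨lt_of_le_of_ne hτ.1.1 fun h => hτ.2 (h ▸ ha), hτ.1.2⟩, hτ.2, ?_⟩
  intro s hs
  by_contra hsS
  exact (csInf_le hbdd ⟨⟨hs.1, hs.2.le.trans hτ.1.2⟩, hsS⟩).not_gt hs.2

def IsSolutionOn (A B xp xm : ℝ → ℝ) (I : Set ℝ) : Prop :=
  ∀ t ∈ I,
    HasDerivAt xp ((xp t / A t) * (1 - (A t)^2 / (B t)^2 - xp t)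
      + (A t / (B t)^2) * (xm t)^2) t ∧
    HasDerivAt xm ((2 * xm t / A t) * (xp t - 1)) t

namespace IsSolutionOn

variable {A B xp xm : ℝ → ℝ} {a b : ℝ}

theorem mono {I J : Set ℝ} (hsol : IsSolutionOn A B xp xm I) (hJI : J ⊆ I) :
    IsSolutionOn A B xp xm J :=
  fun t ht => hsol t (hJI ht)

theorem continuousOn {I : Set ℝ} (hsol : IsSolutionOn A B xp xm I) :
    ContinuousOn (fun s => (xp s, xm s)) I := fun s hs =>
  ((hsol s hs).1.continuousAt.prodMk (hsol s hs).2.continuousAt).continuousWithinAt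

theorem antitoneOn_xm (hsol : IsSolutionOn A B xp xm (Icc a b))
    (hApos : ∀ t ∈ Icc a b, 0 < A t) (hxp : ∀ s ∈ Ioo a b, xp s ≤ 1)
    (hxm : ∀ s ∈ Ioo a b, 0 ≤ xm s) : AntitoneOn xm (Icc a b) :=
  antitoneOn_Icc_of_hasDerivAt_nonpos (fun s hs => (hsol s hs).2) fun s hs =>
    mul_nonpos_of_nonneg_of_nonpos
      (div_nonneg (by linarith [hxm s hs]) (hApos s (Ioo_subset_Icc_self hs)).le)
      (by linarith [hxp s hs])

theorem xm_pos (hsol : IsSolutionOn A B xp xm (Icc a b)) (hab : a ≤ b)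
    (hA : ContinuousOn A (Icc a b)) (hApos : ∀ t ∈ Icc a b, 0 < A t)
    (hxp : ∀ s ∈ Ioo a b, 0 ≤ xp s) (hxm : ∀ s ∈ Ioo a b, 0 ≤ xm s) (ha : 0 < xm a) :
    0 < xm b := by
  obtain ⟨z, hz, hzmin⟩ := isCompact_Icc.exists_isMinOn (nonempty_Icc.2 hab) hA
  refine pos_of_neg_mul_le_deriv (K := 2 / A z) hab (fun s hs => (hsol s hs).2)
    (fun s hs => ?_) ha
  have hAs := hApos s (Ioo_subset_Icc_self hs)
  have hdecay : 2 * xm s / A s ≤ 2 * xm s / A z :=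
    div_le_div_of_nonneg_left (by linarith [hxm s hs]) (hApos z hz)
      (hzmin (Ioo_subset_Icc_self hs))
  have hgain : 0 ≤ 2 * xm s / A s * xp s :=
    mul_nonneg (div_nonneg (by linarith [hxm s hs]) hAs.le) (hxp s hs)
  have : -(2 / A z) * xm s = -(2 * xm s / A z) := by ring
  linarith

theorem xp_ne_zero (hsol : IsSolutionOn A B xp xm (Icc a b)) (hab : a < b)
    (hxp : ∀ s ∈ Icc a b, 0 ≤ xp s) (hxm : xm b ≠ 0) (hA : 0 < A b) (hB : B b ≠ 0) :
    xp b ≠ 0 := by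
  intro h0
  have hderiv := (hsol b (right_mem_Icc.2 hab.le)).1
  have hmin : IsMinOn xp (Icc a b) b := fun s hs => h0 ▸ hxp s hs
  have := hderiv.nonpos_of_isMinOn_Icc hab hmin
  rw [h0, zero_div, zero_mul, zero_add] at this
  have : 0 < A b / B b ^ 2 * xm b ^ 2 := by positivity
  linarith

theorem xp_ne_one (hsol : IsSolutionOn A B xp xm (Icc a b)) (hab : a < b)
    (hxp : ∀ s ∈ Icc a b, xp s ≤ 1) (hxm : xm b ∈ Ioo 0 1) (hA : 0 < A b) (hB : B b ≠ 0) :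
    xp b ≠ 1 := by
  intro h1
  have hderiv := (hsol b (right_mem_Icc.2 hab.le)).1
  have hmax : IsMaxOn xp (Icc a b) b := fun s hs => h1 ▸ hxp s hs
  have := hderiv.nonneg_of_isMaxOn_Icc hab hmax
  have hval : 1 / A b * (1 - A b ^ 2 / B b ^ 2 - 1) + A b / B b ^ 2 * xm b ^ 2
      = A b / B b ^ 2 * (xm b ^ 2 - 1) := by
    field_simp
    ring
  rw [h1, hval] at this
  have : xm b ^ 2 < 1 := by nlinarith [hxm.1, hxm.2]
  have : 0 < A b / B b ^ 2 := by positivity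
  nlinarith

theorem mem_square_of_forall_Ico (hsol : IsSolutionOn A B xp xm (Icc a b)) (hab : a < b)
    (hA : ContinuousOn A (Icc a b)) (hApos : ∀ t ∈ Icc a b, 0 < A t) (hB : B b ≠ 0)
    (hR : ∀ s ∈ Ico a b, xp s ∈ Ioo 0 1 ∧ xm s ∈ Ioo 0 1) :
    xp b ∈ Ioo 0 1 ∧ xm b ∈ Ioo 0 1 := by
  have hb : b ∈ Icc a b := right_mem_Icc.2 hab.le
  obtain ⟨hxpb, -⟩ : xp b ∈ Icc 0 1 ∧ xm b ∈ Icc 0 1 := by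
    have := ((hsol.continuousOn b hb).mono Ico_subset_Icc_self).mem_closure
      (t := Ioo 0 1 ×ˢ Ioo 0 1) (by rwa [closure_Ico hab.ne]) hR
    rwa [closure_prod_eq, closure_Ioo zero_ne_one] at this
  have hxp : ∀ s ∈ Icc a b, xp s ∈ Icc 0 1 := fun s hs => by
    rcases hs.2.eq_or_lt with rfl | hlt
    exacts [hxpb, Ioo_subset_Icc_self (hR s ⟨hs.1, hlt⟩).1]
  have hR' : ∀ s ∈ Ioo a b, xp s ∈ Ioo 0 1 ∧ xm s ∈ Ioo 0 1 :=
    fun s hs => hR s (Ioo_subset_Ico_self hs)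
  have ha := hR a (left_mem_Ico.2 hab)
  have hxm_lt : xm b < 1 :=
    ((antitoneOn_xm hsol hApos (fun s hs => (hR' s hs).1.2.le) fun s hs => (hR' s hs).2.1.le)
      (left_mem_Icc.2 hab.le) hb hab.le).trans_lt ha.2.2
  have hxm_pos : 0 < xm b :=
    xm_pos hsol hab.le hA hApos (fun s hs => (hR' s hs).1.1.le) (fun s hs => (hR' s hs).2.1.le)
      ha.2.1
  have hxm : xm b ∈ Ioo 0 1 := ⟨hxm_pos, hxm_lt⟩
  refine ⟨⟨lt_of_le_of_ne hxpb.1 ?_, lt_of_le_of_ne hxpb.2 ?_⟩, hxm⟩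
  · exact (xp_ne_zero hsol hab (fun s hs => (hxp s hs).1) hxm_pos.ne' (hApos b hb) hB).symm
  · exact xp_ne_one hsol hab (fun s hs => (hxp s hs).2) hxm (hApos b hb) hB

end IsSolutionOn

theorem stmt5_general (A₁ B₁ xp xm : ℝ → ℝ)
    (hA : ContinuousOn A₁ (Set.Ioi 0)) (hApos : ∀ t ∈ Set.Ioi (0:ℝ), 0 < A₁ t)
    (hBpos : ∀ t ∈ Set.Ioi (0:ℝ), 0 < B₁ t)
    (t₀ T : ℝ) (ht₀ : 0 < t₀)
    (hsol : ∀ t ∈ Set.Ico t₀ T,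
      HasDerivAt xp ((xp t / A₁ t) * (1 - (A₁ t)^2 / (B₁ t)^2 - xp t)
        + (A₁ t / (B₁ t)^2) * (xm t)^2) t ∧
      HasDerivAt xm ((2 * xm t / A₁ t) * (xp t - 1)) t)
    (h0 : xp t₀ ∈ Set.Ioo (0:ℝ) 1 ∧ xm t₀ ∈ Set.Ioo (0:ℝ) 1) :
    ∀ t ∈ Set.Ico t₀ T, xp t ∈ Set.Ioo (0:ℝ) 1 ∧ xm t ∈ Set.Ioo (0:ℝ) 1 := by
  intro t ht
  by_contra hnot
  have hsol' : IsSolutionOn A₁ B₁ xp xm (Icc t₀ t) :=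
    fun s hs => hsol s ⟨hs.1, hs.2.trans_lt ht.2⟩
  obtain ⟨τ, hτ, hτR, hR⟩ :=
    exists_first_exit (isOpen_Ioo.prod isOpen_Ioo) ht.1 hsol'.continuousOn h0 hnot
  have hsub : Icc t₀ τ ⊆ Ioi 0 := fun s hs => ht₀.trans_le hs.1
  have hBτ : B₁ τ ≠ 0 := (hBpos τ (hsub (right_mem_Icc.2 hτ.1.le))).ne'
  exact hτR ((hsol'.mono (Icc_subset_Icc_right hτ.2)).mem_square_of_forall_Ico hτ.1
    (hA.mono hsub) (fun s hs => hApos s (hsub hs)) hBτ hR)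

/-- Forward invariance of the open square `R = (0,1) × (0,1)` for the system
`x⁺' = (x⁺/A₁)(1 − A₁²/B₁² − x⁺) + (A₁/B₁²)(x⁻)²`, `x⁻' = (2x⁻/A₁)(x⁺ − 1)`:
a solution starting in `R` at time `t₀ > 0` stays in `R` for all later times in
its interval of existence. -/
theorem stmt5 (A₁ B₁ xp xm : ℝ → ℝ)
    (hA : ContinuousOn A₁ (Set.Ioi 0)) (hApos : ∀ t ∈ Set.Ioi (0:ℝ), 0 < A₁ t)
    (hB : ContinuousOn B₁ (Set.Ioi 0)) (hBpos : ∀ t ∈ Set.Ioi (0:ℝ), 0 < B₁ t)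
    (t₀ T : ℝ) (ht₀ : 0 < t₀) (hT : t₀ < T)
    (hsol : ∀ t ∈ Set.Ico t₀ T,
      HasDerivAt xp ((xp t / A₁ t) * (1 - (A₁ t)^2 / (B₁ t)^2 - xp t)
        + (A₁ t / (B₁ t)^2) * (xm t)^2) t ∧
      HasDerivAt xm ((2 * xm t / A₁ t) * (xp t - 1)) t)
    (h0 : xp t₀ ∈ Set.Ioo (0:ℝ) 1 ∧ xm t₀ ∈ Set.Ioo (0:ℝ) 1) :
    ∀ t ∈ Set.Ico t₀ T, xp t ∈ Set.Ioo (0:ℝ) 1 ∧ xm t ∈ Set.Ioo (0:ℝ) 1 :=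
  stmt5_general A₁ B₁ xp xm hA hApos hBpos t₀ T ht₀ hsol h0
end

section
/- Let A₁, A₂, A₃, B₁, B₂, B₃ be positive differentiable functions on (0,∞), and let aᵢ± solve the decoupled linear ODEs aᵢ⁺' = −(Aᵢ/(BⱼB_k) − Aᵢ/(AⱼA_k))aᵢ⁺ and aᵢ⁻' = −(Bᵢ/(BⱼA_k) + Bᵢ/(AⱼB_k))aᵢ⁻ for each cyclic permutation {i,j,k} of {1,2,3}. If Aᵢ(t) = t/2 + O(t³) and Bᵢ(t) = b₀ + O(t²) with b₀ > 0, then aᵢ⁺(t) ~ aᵢ⁺(t₀)t₀⁻²t² and aᵢ⁻(t) ~ aᵢ⁻(t₀)t₀⁴t⁻⁴ as t → 0⁺. In particular aᵢ⁻ extends continuously to 0 only if aᵢ⁻ ≡ 0. -/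
open Real Filter Topology Asymptotics

/-- `(i, j, k)` is a cyclic permutation of `(0, 1, 2)` in `Fin 3`. -/
def Cyclic3 (i j k : Fin 3) : Prop :=
  (i, j, k) = ((0:Fin 3), (1:Fin 3), (2:Fin 3)) ∨
  (i, j, k) = ((1:Fin 3), (2:Fin 3), (0:Fin 3)) ∨
  (i, j, k) = ((2:Fin 3), (0:Fin 3), (1:Fin 3))

/-!
Each of `aᵢ⁺`, `aᵢ⁻` solves a scalar linear equation `a' = f a` on `(0, ∞)`, so
`a t = a t₀ · exp ∫_{t₀}^t f`. Writing `Aᵢ = (t/2)(1 + O(t²))` and `Bᵢ = b₀(1 + O(t²))`, and using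
that products and quotients preserve a relative error `O(t²)`, the coefficient is `f = n/t + O(t)`
with `n = 2` for `aᵢ⁺` and `n = -4` for `aᵢ⁻`. The remainder `f - n/t` is integrable at `0`, hence
`a t · t⁻ⁿ → a t₀ · t₀⁻ⁿ · exp (-∫₀^{t₀} (f - n/s) ds)`, which vanishes only if `a t₀ = 0`, i.e.
only if `a ≡ 0`. If `aᵢ⁻` had a finite limit at `0`, then `aᵢ⁻ t⁴ → 0`, so `aᵢ⁻ ≡ 0`.
-/

open MeasureTheory Set

theorem MeasureTheory.IntegrableAtFilter.integrableOn_Ioc {E : Type*} [NormedAddCommGroup E]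
    {g : ℝ → E} {a b : ℝ}
    (hg : IntegrableAtFilter g (𝓝[>] a)) (hc : ContinuousOn g (Ioc a b)) :
    IntegrableOn g (Ioc a b) := by
  obtain ⟨s, hs, hgs⟩ := hg
  obtain ⟨u, hu, hus⟩ := mem_nhdsGT_iff_exists_Ioc_subset.1 hs
  refine IntegrableOn.mono_set ?_ (Ioc_subset_Ioc_union_Icc (b := u))
  exact (hgs.mono_set hus).union
    (hc.mono fun x hx => ⟨lt_of_lt_of_le hu hx.1, hx.2⟩).integrableOn_Icc

section LinearODE

variable {f a : ℝ → ℝ} {t₀ : ℝ}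

theorem uIcc_subset_Ioi_of_lt {a b c : ℝ} (ha : c < a) (hb : c < b) : uIcc a b ⊆ Ioi c :=
  fun _ hx => lt_of_lt_of_le (lt_min ha hb) hx.1

theorem hasDerivAt_integral_of_continuousOn_Ioi (hf : ContinuousOn f (Ioi 0)) (ht₀ : 0 < t₀)
    {t : ℝ} (ht : 0 < t) : HasDerivAt (fun x => ∫ s in t₀..x, f s) (f t) t :=
  intervalIntegral.integral_hasDerivAt_right
    ((hf.mono (uIcc_subset_Ioi_of_lt ht₀ ht)).intervalIntegrable)
    (hf.stronglyMeasurableAtFilter isOpen_Ioi t ht) (hf.continuousAt (Ioi_mem_nhds ht))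

theorem eq_mul_exp_integral_of_hasDerivAt (hf : ContinuousOn f (Ioi 0))
    (ha : ∀ t ∈ Ioi (0 : ℝ), HasDerivAt a (f t * a t) t) (ht₀ : 0 < t₀) {t : ℝ} (ht : 0 < t) :
    a t = a t₀ * exp (∫ s in t₀..t, f s) := by
  have hderiv : ∀ x ∈ Ioi (0 : ℝ),
      HasDerivAt (fun x => a x * exp (-∫ s in t₀..x, f s)) 0 x := fun x hx => by
    have := (ha x hx).mul (hasDerivAt_integral_of_continuousOn_Ioi hf ht₀ hx).fun_neg.exp
    exact this.congr_deriv (by ring)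
  have hconst := isOpen_Ioi.is_const_of_deriv_eq_zero isPreconnected_Ioi
    (fun x hx => (hderiv x hx).differentiableAt.differentiableWithinAt)
    (fun x hx => (hderiv x hx).deriv) ht ht₀
  simp only [intervalIntegral.integral_same, neg_zero, exp_zero, mul_one] at hconst
  rw [← hconst, mul_assoc, ← exp_add, neg_add_cancel, exp_zero, mul_one]

theorem tendsto_mul_rpow_neg_of_hasDerivAt {n : ℝ} (hf : ContinuousOn f (Ioi 0))
    (ha : ∀ t ∈ Ioi (0 : ℝ), HasDerivAt a (f t * a t) t)
    (hr : IntegrableAtFilter (fun t => f t - n / t) (𝓝[>] 0)) (ht₀ : 0 < t₀) :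
    Tendsto (fun t => a t * t ^ (-n)) (𝓝[>] 0)
      (𝓝 (a t₀ * t₀ ^ (-n) * exp (-∫ s in 0..t₀, (f s - n / s)))) := by
  have hn : ContinuousOn (fun s : ℝ => n / s) (Ioi 0) :=
    continuousOn_const.div continuousOn_id fun _ hs => hs.ne'
  have hr_int : IntegrableOn (fun s => f s - n / s) (uIcc 0 t₀) := by
    rw [uIcc_of_le ht₀.le, integrableOn_Icc_iff_integrableOn_Ioc]
    exact hr.integrableOn_Ioc ((hf.sub hn).mono Ioc_subset_Ioi_self)
  have hlim : Tendsto (fun t => ∫ s in t..t₀, (f s - n / s)) (𝓝[>] 0)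
      (𝓝 (∫ s in 0..t₀, (f s - n / s))) := by
    have := intervalIntegral.continuousOn_primitive_interval_left hr_int 0 left_mem_uIcc
    rw [uIcc_of_le ht₀.le] at this
    rw [← nhdsWithin_Ioc_eq_nhdsGT ht₀]
    exact this.tendsto.mono_left (nhdsWithin_mono _ Ioc_subset_Icc_self)
  refine ((hlim.neg.rexp).const_mul _).congr' ?_
  filter_upwards [self_mem_nhdsWithin] with t (ht : 0 < t)
  have hremainder : ∫ s in t..t₀, (f s - n / s) = -(∫ s in t₀..t, f s) + log (t / t₀) * n := by
    have hsub : uIcc t t₀ ⊆ Ioi 0 := uIcc_subset_Ioi_of_lt ht ht₀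
    rw [intervalIntegral.integral_sub ((hf.mono hsub).intervalIntegrable)
      ((hn.mono hsub).intervalIntegrable)]
    simp only [div_eq_mul_inv n]
    rw [intervalIntegral.integral_const_mul,
      integral_inv fun h => self_notMem_Ioi (hsub h), intervalIntegral.integral_symm,
      ← inv_div t, log_inv]
    ring
  -- it remains to see `(t / t₀) ^ n * t ^ (-n) = t₀ ^ (-n)`
  rw [eq_mul_exp_integral_of_hasDerivAt hf ha ht₀ ht, hremainder, neg_add, neg_neg, exp_add,
    exp_neg, ← rpow_def_of_pos (div_pos ht ht₀), div_rpow ht.le ht₀.le, rpow_neg ht.le,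
    rpow_neg ht₀.le]
  field_simp

theorem integrableAtFilter_nhdsGT_zero_of_isBigO {g : ℝ → ℝ} (hc : ContinuousOn g (Ioi 0))
    (h : g =O[𝓝[>] 0] fun t => t) : IntegrableAtFilter g (𝓝[>] 0) :=
  (h.trans_tendsto (tendsto_nhdsWithin_of_tendsto_nhds tendsto_id)).integrableAtFilter
    (hc.stronglyMeasurableAtFilter_nhdsWithin measurableSet_Ioi 0)
    (Measure.finiteAt_nhdsWithin _ _ _)

theorem exists_tendsto_mul_rpow_neg_of_hasDerivAt {n : ℝ} (hf : ContinuousOn f (Ioi 0))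
    (ha : ∀ t ∈ Ioi (0 : ℝ), HasDerivAt a (f t * a t) t)
    (hr : (fun t => f t - n / t) =O[𝓝[>] 0] fun t => t) (ht₀ : 0 < t₀) :
    ∃ L, Tendsto (fun t => a t * t ^ (-n)) (𝓝[>] 0) (𝓝 L) ∧ (a t₀ ≠ 0 → L ≠ 0) ∧
      (L = 0 → ∀ t ∈ Ioi (0 : ℝ), a t = 0) := by
  have hr_int := integrableAtFilter_nhdsGT_zero_of_isBigO
    (hf.sub (continuousOn_const.div continuousOn_id fun _ hs => hs.ne')) hr
  refine ⟨_, tendsto_mul_rpow_neg_of_hasDerivAt hf ha hr_int ht₀, fun h => by positivity,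
    fun hL t ht => ?_⟩
  have ha₀ : a t₀ = 0 := by simpa [(rpow_pos_of_pos ht₀ _).ne'] using hL
  rw [eq_mul_exp_integral_of_hasDerivAt hf ha ht₀ ht, ha₀, zero_mul]

end LinearODE

namespace Asymptotics

variable {α 𝕜 : Type*} [NormedField 𝕜] {l : Filter α} {ε f g f₁ f₂ g₁ g₂ : α → 𝕜}

/- A hypothesis `(fun x => f x - g x) =O[l] fun x => g x * ε x` reads `f = g (1 + O(ε))`. -/

theorem isBigO_mul_sub_mul (h₁ : (fun x => f₁ x - g₁ x) =O[l] fun x => g₁ x * ε x)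
    (h₂ : (fun x => f₂ x - g₂ x) =O[l] fun x => g₂ x * ε x) (hε : ε =O[l] fun _ => (1 : 𝕜)) :
    (fun x => f₁ x * f₂ x - g₁ x * g₂ x) =O[l] fun x => g₁ x * g₂ x * ε x := by
  have hprod : (fun x => (f₁ x - g₁ x) * (f₂ x - g₂ x)) =O[l] fun x => g₁ x * g₂ x * ε x :=
    (h₁.mul h₂).trans (((isBigO_refl (fun x => g₁ x * g₂ x * ε x) l).mul hε).congr
      (fun x => by ring) fun x => mul_one _)
  have hleft : (fun x => (f₁ x - g₁ x) * g₂ x) =O[l] fun x => g₁ x * g₂ x * ε x :=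
    (h₁.mul (isBigO_refl g₂ l)).congr_right fun x => by ring
  have hright : (fun x => g₁ x * (f₂ x - g₂ x)) =O[l] fun x => g₁ x * g₂ x * ε x :=
    ((isBigO_refl g₁ l).mul h₂).congr_right fun x => by ring
  exact ((hprod.add hleft).add hright).congr_left fun x => by ring

theorem isBigO_inv_sub_inv (h : (fun x => f x - g x) =O[l] fun x => g x * ε x)
    (hε : Tendsto ε l (𝓝 0)) :
    (fun x => (f x)⁻¹ - (g x)⁻¹) =O[l] fun x => (g x)⁻¹ * ε x := by
  have hlo : (fun x => f x - g x) =o[l] g :=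
    h.trans_isLittleO (((isBigO_refl g l).mul_isLittleO ((isLittleO_one_iff 𝕜).2 hε)).congr_right
      fun x => mul_one _)
  have hinv : (fun x => (f x)⁻¹) =O[l] fun x => (g x)⁻¹ :=
    (show f ~[l] g from hlo).inv.isBigO
  -- `f` and `g` vanish together, so `f⁻¹ - g⁻¹ = -(f - g) f⁻¹ g⁻¹` holds even where `0⁻¹ = 0`.
  have hzero : ∀ᶠ x in l, f x = 0 ↔ g x = 0 := by
    filter_upwards [hlo.def (c := 1 / 2) (by norm_num)] with x hx
    rw [← norm_le_zero_iff, ← norm_le_zero_iff (a := g x)]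
    constructor <;> intro h0
    · linarith [norm_sub_norm_le (g x) (f x), norm_sub_rev (f x) (g x)]
    · linarith [norm_sub_norm_le (f x) (g x)]
  have hdiff : (fun x => -((f x - g x) * (f x)⁻¹ * (g x)⁻¹)) =O[l] fun x => (g x)⁻¹ * ε x :=
    ((h.mul hinv).mul (isBigO_refl _ l)).neg_left.congr_right fun x => by
      rcases eq_or_ne (g x) 0 with hg | hg
      · simp [hg]
      · field_simp
  refine hdiff.congr' ?_ EventuallyEq.rfl
  filter_upwards [hzero] with x hx
  rcases eq_or_ne (g x) 0 with hg | hg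
  · simp [hg, hx.2 hg]
  · field_simp [hg, mt hx.1 hg]
    ring

theorem isBigO_div_sub_div (h₁ : (fun x => f₁ x - g₁ x) =O[l] fun x => g₁ x * ε x)
    (h₂ : (fun x => f₂ x - g₂ x) =O[l] fun x => g₂ x * ε x) (hε : Tendsto ε l (𝓝 0)) :
    (fun x => f₁ x / f₂ x - g₁ x / g₂ x) =O[l] fun x => g₁ x / g₂ x * ε x := by
  simpa only [div_eq_mul_inv] using
    isBigO_mul_sub_mul h₁ (isBigO_inv_sub_inv h₂ hε) (hε.isBigO_one 𝕜)

theorem isBigO_div_mul_sub_div_mul {f₃ g₃ : α → 𝕜}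
    (h₁ : (fun x => f₁ x - g₁ x) =O[l] fun x => g₁ x * ε x)
    (h₂ : (fun x => f₂ x - g₂ x) =O[l] fun x => g₂ x * ε x)
    (h₃ : (fun x => f₃ x - g₃ x) =O[l] fun x => g₃ x * ε x) (hε : Tendsto ε l (𝓝 0)) :
    (fun x => f₁ x / (f₂ x * f₃ x) - g₁ x / (g₂ x * g₃ x)) =O[l]
      fun x => g₁ x / (g₂ x * g₃ x) * ε x :=
  isBigO_div_sub_div h₁ (isBigO_mul_sub_mul h₂ h₃ (hε.isBigO_one 𝕜)) hε

theorem IsBigO.of_sub_isBigO_mul (h : (fun x => f x - g x) =O[l] fun x => g x * ε x)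
    (hε : ε =O[l] fun _ => (1 : 𝕜)) : f =O[l] g :=
  (((h.trans ((isBigO_refl g l).mul hε)).congr_right fun _ => mul_one _).add
    (isBigO_refl g l)).congr_left fun _ => sub_add_cancel _ _

end Asymptotics

theorem tendsto_pow_nhdsGT_zero {n : ℕ} (hn : n ≠ 0) :
    Tendsto (fun t : ℝ => t ^ n) (𝓝[>] 0) (𝓝 0) :=
  ((continuous_pow n).tendsto' 0 0 (zero_pow hn)).mono_left nhdsWithin_le_nhds

section NearZero

variable {f₁ f₂ f₃ g₁ g₂ g₃ : ℝ → ℝ}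
  (h₁ : (fun t => f₁ t - g₁ t) =O[𝓝[>] 0] fun t => g₁ t * t ^ 2)
  (h₂ : (fun t => f₂ t - g₂ t) =O[𝓝[>] 0] fun t => g₂ t * t ^ 2)
  (h₃ : (fun t => f₃ t - g₃ t) =O[𝓝[>] 0] fun t => g₃ t * t ^ 2)
include h₁ h₂ h₃

theorem isBigO_div_mul_sub_const_div {c : ℝ} (hg : ∀ᶠ t in 𝓝[>] 0, g₁ t / (g₂ t * g₃ t) = c / t) :
    (fun t => f₁ t / (f₂ t * f₃ t) - c / t) =O[𝓝[>] 0] fun t => t := by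
  refine ((isBigO_div_mul_sub_div_mul h₁ h₂ h₃ (tendsto_pow_nhdsGT_zero two_ne_zero)).congr' ?_
    ?_).trans (isBigO_const_mul_self c _ _)
  · filter_upwards [hg] with t ht
    rw [ht]
  · filter_upwards [hg, self_mem_nhdsWithin] with t ht (ht₀ : 0 < t)
    rw [ht]
    field_simp

theorem isBigO_div_mul_of_isBigO (hg : (fun t => g₁ t / (g₂ t * g₃ t)) =O[𝓝[>] 0] fun t => t) :
    (fun t => f₁ t / (f₂ t * f₃ t)) =O[𝓝[>] 0] fun t => t :=
  have hε := tendsto_pow_nhdsGT_zero two_ne_zero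
  ((isBigO_div_mul_sub_div_mul h₁ h₂ h₃ hε).of_sub_isBigO_mul (hε.isBigO_one ℝ)).trans hg

end NearZero

theorem continuousOn_div_mul {u v w : ℝ → ℝ} {s : Set ℝ} (hu : ContinuousOn u s)
    (hv : ContinuousOn v s) (hw : ContinuousOn w s) (hv₀ : ∀ t ∈ s, 0 < v t)
    (hw₀ : ∀ t ∈ s, 0 < w t) : ContinuousOn (fun t => u t / (v t * w t)) s :=
  hu.div (hv.mul hw) fun t ht => (mul_pos (hv₀ t ht) (hw₀ t ht)).ne'

section Instanton

variable {ι : Type*} {A B : ι → ℝ → ℝ} {b₀ : ℝ} {i j k : ι}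

-- The equations read `aᵢ⁺' = plusCoeff A B i j k · aᵢ⁺` and `aᵢ⁻' = minusCoeff A B i j k · aᵢ⁻`.
noncomputable def plusCoeff (A B : ι → ℝ → ℝ) (i j k : ι) (t : ℝ) : ℝ :=
  -(A i t / (B j t * B k t) - A i t / (A j t * A k t))

noncomputable def minusCoeff (A B : ι → ℝ → ℝ) (i j k : ι) (t : ℝ) : ℝ :=
  -(B i t / (B j t * A k t) + B i t / (A j t * B k t))

theorem continuousOn_plusCoeff (hApos : ∀ i, ∀ t ∈ Ioi (0 : ℝ), 0 < A i t)
    (hBpos : ∀ i, ∀ t ∈ Ioi (0 : ℝ), 0 < B i t) (hAc : ∀ i, ContinuousOn (A i) (Ioi 0))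
    (hBc : ∀ i, ContinuousOn (B i) (Ioi 0)) : ContinuousOn (plusCoeff A B i j k) (Ioi 0) :=
  ((continuousOn_div_mul (hAc i) (hBc j) (hBc k) (hBpos j) (hBpos k)).sub
    (continuousOn_div_mul (hAc i) (hAc j) (hAc k) (hApos j) (hApos k))).neg

theorem continuousOn_minusCoeff (hApos : ∀ i, ∀ t ∈ Ioi (0 : ℝ), 0 < A i t)
    (hBpos : ∀ i, ∀ t ∈ Ioi (0 : ℝ), 0 < B i t) (hAc : ∀ i, ContinuousOn (A i) (Ioi 0))
    (hBc : ∀ i, ContinuousOn (B i) (Ioi 0)) : ContinuousOn (minusCoeff A B i j k) (Ioi 0) :=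
  ((continuousOn_div_mul (hBc i) (hBc j) (hAc k) (hBpos j) (hApos k)).add
    (continuousOn_div_mul (hBc i) (hAc j) (hBc k) (hApos j) (hBpos k))).neg

section Expansions

variable (hA : ∀ i, (fun t => A i t - t / 2) =O[𝓝[>] 0] fun t => t / 2 * t ^ 2)
  (hB : ∀ i, (fun t => B i t - b₀) =O[𝓝[>] 0] fun t => b₀ * t ^ 2)
include hA hB

theorem isBigO_plusCoeff_sub :
    (fun t => plusCoeff A B i j k t - 2 / t) =O[𝓝[>] 0] fun t => t := by
  have hAAA := isBigO_div_mul_sub_const_div (hA i) (hA j) (hA k) (c := 2) <| by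
    filter_upwards [self_mem_nhdsWithin] with t (ht : 0 < t)
    field_simp
  have hABB := isBigO_div_mul_of_isBigO (hA i) (hB j) (hB k) <|
    (isBigO_const_mul_self (1 / (2 * b₀ ^ 2)) _ _).congr_left fun t => by ring
  exact (hAAA.sub hABB).congr_left fun t => by simp only [plusCoeff]; ring

theorem isBigO_minusCoeff_sub (hb₀ : b₀ ≠ 0) :
    (fun t => minusCoeff A B i j k t - -4 / t) =O[𝓝[>] 0] fun t => t := by
  have hmodel : ∀ᶠ t in 𝓝[>] (0 : ℝ), b₀ / (b₀ * (t / 2)) = 2 / t := by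
    filter_upwards [self_mem_nhdsWithin] with t (ht : 0 < t)
    field_simp
  have hBBA := isBigO_div_mul_sub_const_div (hB i) (hB j) (hA k) hmodel
  have hBAB := isBigO_div_mul_sub_const_div (hB i) (hA j) (hB k) <| by
    filter_upwards [hmodel] with t ht
    rw [← ht, mul_comm]
  exact (hBBA.add hBAB).neg_left.congr_left fun t => by simp only [minusCoeff]; ring

end Expansions

theorem asymptotics_nhdsGT_zero_of_hasDerivAt (hb₀ : 0 < b₀)
    (hApos : ∀ i, ∀ t ∈ Ioi (0 : ℝ), 0 < A i t) (hBpos : ∀ i, ∀ t ∈ Ioi (0 : ℝ), 0 < B i t)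
    (hAc : ∀ i, ContinuousOn (A i) (Ioi 0)) (hBc : ∀ i, ContinuousOn (B i) (Ioi 0))
    (hAasym : ∀ i, (fun t => A i t - t / 2) =O[𝓝[>] (0 : ℝ)] fun t => t ^ 3)
    (hBasym : ∀ i, (fun t => B i t - b₀) =O[𝓝[>] (0 : ℝ)] fun t => t ^ 2) {ap am : ℝ → ℝ}
    (hap : ∀ t ∈ Ioi (0 : ℝ), HasDerivAt ap (plusCoeff A B i j k t * ap t) t)
    (ham : ∀ t ∈ Ioi (0 : ℝ), HasDerivAt am (minusCoeff A B i j k t * am t) t)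
    {t₀ : ℝ} (ht₀ : 0 < t₀) :
    (∃ L : ℝ, Tendsto (fun t => ap t / t ^ 2) (𝓝[>] 0) (𝓝 L) ∧ (ap t₀ ≠ 0 → L ≠ 0)) ∧
      (∃ L : ℝ, Tendsto (fun t => am t * t ^ 4) (𝓝[>] 0) (𝓝 L) ∧ (am t₀ ≠ 0 → L ≠ 0)) ∧
      ((∃ l : ℝ, Tendsto am (𝓝[>] 0) (𝓝 l)) → ∀ t ∈ Ioi (0 : ℝ), am t = 0) := by
  have hA i : (fun t => A i t - t / 2) =O[𝓝[>] 0] fun t => t / 2 * t ^ 2 :=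
    (hAasym i).trans ((isBigO_const_mul_self 2 _ _).congr_left fun t => by ring)
  have hB i : (fun t => B i t - b₀) =O[𝓝[>] 0] fun t => b₀ * t ^ 2 :=
    (hBasym i).trans ((isBigO_const_mul_self b₀⁻¹ _ _).congr_left fun t => by field_simp)
  obtain ⟨Lp, hLp, hLp₀, -⟩ := exists_tendsto_mul_rpow_neg_of_hasDerivAt
    (continuousOn_plusCoeff hApos hBpos hAc hBc) hap (isBigO_plusCoeff_sub hA hB) ht₀
  obtain ⟨Lm, hLm, hLm₀, hLm_zero⟩ := exists_tendsto_mul_rpow_neg_of_hasDerivAt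
    (continuousOn_minusCoeff hApos hBpos hAc hBc) ham (isBigO_minusCoeff_sub hA hB hb₀.ne') ht₀
  have hLm' : Tendsto (fun t => am t * t ^ 4) (𝓝[>] 0) (𝓝 Lm) := by
    simpa only [neg_neg, rpow_ofNat] using hLm
  refine ⟨⟨Lp, hLp.congr' ?_, hLp₀⟩, ⟨Lm, hLm', hLm₀⟩, fun ⟨l, hl⟩ => hLm_zero ?_⟩
  · filter_upwards [self_mem_nhdsWithin] with t (ht : 0 < t)
    rw [rpow_neg ht.le, rpow_ofNat, div_eq_mul_inv]
  · simpa using tendsto_nhds_unique hLm' (hl.mul (tendsto_pow_nhdsGT_zero four_ne_zero))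

end Instanton

theorem exists_cyclic3 (i : Fin 3) : ∃ j k, Cyclic3 i j k := by
  unfold Cyclic3
  decide +revert

/-- Abelian `SU(2)²`-invariant instanton ODEs: with `Aᵢ t = t/2 + O(t³)` and
`Bᵢ t = b₀ + O(t²)`, `b₀ > 0`, each `aᵢ⁺` behaves like `t²` (i.e. `aᵢ⁺/t²` has a finite
limit, nonzero when `aᵢ⁺ t₀ ≠ 0`) and each `aᵢ⁻` behaves like `t⁻⁴` (i.e. `aᵢ⁻·t⁴` has a
finite limit, nonzero when `aᵢ⁻ t₀ ≠ 0`) as `t → 0⁺`; in particular `aᵢ⁻` extends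
continuously to `0` only if it vanishes identically. -/
theorem stmt14 (A B ap am : Fin 3 → ℝ → ℝ) (b₀ : ℝ) (hb₀ : 0 < b₀)
    (hApos : ∀ i, ∀ t ∈ Set.Ioi (0:ℝ), 0 < A i t)
    (hBpos : ∀ i, ∀ t ∈ Set.Ioi (0:ℝ), 0 < B i t)
    (hAc : ∀ i, ContinuousOn (A i) (Set.Ioi 0))
    (hBc : ∀ i, ContinuousOn (B i) (Set.Ioi 0))
    (hAasym : ∀ i, (fun t => A i t - t/2) =O[𝓝[>] (0:ℝ)] fun t => t^3)
    (hBasym : ∀ i, (fun t => B i t - b₀) =O[𝓝[>] (0:ℝ)] fun t => t^2)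
    (hode : ∀ i j k, Cyclic3 i j k → ∀ t ∈ Set.Ioi (0:ℝ),
      HasDerivAt (ap i)
        (-(A i t / (B j t * B k t) - A i t / (A j t * A k t)) * ap i t) t ∧
      HasDerivAt (am i)
        (-(B i t / (B j t * A k t) + B i t / (A j t * B k t)) * am i t) t)
    (t₀ : ℝ) (ht₀ : 0 < t₀) :
    ∀ i : Fin 3,
      (∃ L : ℝ, Tendsto (fun t => ap i t / t^2) (𝓝[>] 0) (𝓝 L) ∧
        (ap i t₀ ≠ 0 → L ≠ 0)) ∧
      (∃ L : ℝ, Tendsto (fun t => am i t * t^4) (𝓝[>] 0) (𝓝 L) ∧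
        (am i t₀ ≠ 0 → L ≠ 0)) ∧
      ((∃ l : ℝ, Tendsto (am i) (𝓝[>] 0) (𝓝 l)) → ∀ t ∈ Set.Ioi (0:ℝ), am i t = 0) := by
  intro i
  obtain ⟨j, k, hijk⟩ := exists_cyclic3 i
  exact asymptotics_nhdsGT_zero_of_hasDerivAt hb₀ hApos hBpos hAc hBc hAasym hBasym
    (fun t ht => (hode i j k hijk t ht).1) (fun t ht => (hode i j k hijk t ht).2) ht₀
end
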